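/- arXiv:2112.14799 — 9 statements merged into one kernel-verified Lean document; each statement's English description precedes it below -/
import Mathlib

section
/- Let σ ∈ (0,1), τ > 0, g, d ∈ ℝⁿ, c ∈ ℝᵐ, and let H be a real n×n matrix. Define Δq := −τ(gᵀd + ½·max{dᵀHd, 0}) + ‖c‖₁. If τ·(gᵀd + max{dᵀHd, 0}) ≤ (1−σ)‖c‖₁, then Δq ≥ ½·τ·max{dᵀHd, 0} + σ‖c‖₁ ≥ 0. -/
open Matrix

/-- Inequality (2.8)/(3.7): the model reduction
`Δq = -τ(gᵀd + ½ max{dᵀHd,0}) + ‖c‖₁` satisfies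
`Δq ≥ ½ τ max{dᵀHd,0} + σ ‖c‖₁ ≥ 0` whenever `τ (gᵀd + max{dᵀHd,0}) ≤ (1-σ)‖c‖₁`. -/
theorem stmt_1 (n m : ℕ) (σ τ : ℝ) (hσ : σ ∈ Set.Ioo (0:ℝ) 1) (hτ : 0 < τ)
    (g d : Fin n → ℝ) (c : Fin m → ℝ) (H : Matrix (Fin n) (Fin n) ℝ)
    (h : τ * (g ⬝ᵥ d + max (d ⬝ᵥ H.mulVec d) 0) ≤ (1 - σ) * ∑ i, |c i|) :
    ((1/2) * τ * max (d ⬝ᵥ H.mulVec d) 0 + σ * ∑ i, |c i| ≤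
      -(τ * (g ⬝ᵥ d + (1/2) * max (d ⬝ᵥ H.mulVec d) 0)) + ∑ i, |c i|) ∧
    (0 ≤ (1/2) * τ * max (d ⬝ᵥ H.mulVec d) 0 + σ * ∑ i, |c i|) := by
  have hm : (0:ℝ) ≤ max (d ⬝ᵥ H.mulVec d) 0 := le_max_right _ _
  have hc : (0:ℝ) ≤ ∑ i, |c i| := Finset.sum_nonneg fun i _ => abs_nonneg _
  constructor
  · nlinarith
  · nlinarith [hσ.1]
end

section
/- Let n, m be positive integers, let c ∈ ℝᵐ, let u, v ∈ ℝⁿ be orthogonal vectors, set d := u + v, and suppose ‖v‖² ≤ κ_v‖c‖ for some κ_v > 0, where ‖·‖ denotes the Euclidean norm. Let κ_uv > 0 and define Ψ := ‖u‖² + ‖c‖ if ‖u‖² ≥ κ_uv‖v‖², and Ψ := ‖c‖ otherwise. Then with κ_Ψ := (1 + κ_uv)κ_v one has ‖d‖² + ‖c‖ ≤ (κ_Ψ + 1)·Ψ. -/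
open RealInnerProductSpace

/-- Lemma 3.1: `‖d‖² + ‖c‖ ≤ (κ_Ψ + 1) Ψ` with `κ_Ψ = (1+κ_uv)κ_v`,
where `d = u + v` with `u ⟂ v`, `‖v‖² ≤ κ_v ‖c‖`, and
`Ψ = ‖u‖² + ‖c‖` if `‖u‖² ≥ κ_uv ‖v‖²`, `Ψ = ‖c‖` otherwise. -/
theorem stmt_2 (n m : ℕ) (hn : 0 < n) (hm : 0 < m)
    (c : EuclideanSpace ℝ (Fin m)) (u v : EuclideanSpace ℝ (Fin n))
    (huv : ⟪u, v⟫ = 0) (κv : ℝ) (hκv : 0 < κv) (hv : ‖v‖^2 ≤ κv * ‖c‖)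
    (κuv : ℝ) (hκuv : 0 < κuv) :
    ‖u + v‖^2 + ‖c‖ ≤
      ((1 + κuv) * κv + 1) *
        (if κuv * ‖v‖^2 ≤ ‖u‖^2 then ‖u‖^2 + ‖c‖ else ‖c‖) := by
  have hpyth : ‖u + v‖^2 = ‖u‖^2 + ‖v‖^2 := by
    rw [norm_add_sq_real, huv]; ring
  have hc : (0:ℝ) ≤ ‖c‖ := norm_nonneg _
  have hu2 : (0:ℝ) ≤ ‖u‖^2 := sq_nonneg _
  rw [hpyth]
  split_ifs with h
  · nlinarith [mul_nonneg hκv.le hu2, mul_nonneg (mul_nonneg hκuv.le hκv.le) hu2, mul_nonneg (mul_nonneg hκuv.le hκv.le) hc]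
  · push_neg at h
    nlinarith
end

section
/- Let σ ∈ (0,1), ζ > 0, κ_uv > 0, τ₋₁ > 0, and τ ∈ (0, τ₋₁]. Let g, u, v ∈ ℝⁿ be such that u and v are orthogonal, set d := u + v, let c ∈ ℝᵐ, and let H be a real n×n matrix. Define Δq := −τ(gᵀd + ½·max{dᵀHd, 0}) + ‖c‖₁ and Ψ := ‖u‖² + ‖c‖ if ‖u‖² ≥ κ_uv‖v‖², Ψ := ‖c‖ otherwise. Assume (i) Δq ≥ ½·τ·max{dᵀHd, 0} + σ‖c‖₁, and (ii) if ‖u‖² ≥ κ_uv‖v‖² then ½·dᵀHd ≥ ¼·ζ‖u‖². Then Δq ≥ κ_q·τ·Ψ with κ_q := min{ζ/4, σ/τ₋₁}. -/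
open Matrix

/-- The Euclidean norm of a vector in `ℝⁿ`. -/
noncomputable def euclNorm {k : ℕ} (x : Fin k → ℝ) : ℝ := Real.sqrt (∑ i, (x i)^2)

/-- The ℓ₁-norm of a vector in `ℝᵐ`. -/
def l1norm {k : ℕ} (x : Fin k → ℝ) : ℝ := ∑ i, |x i|

lemma enorm_nonneg' {k : ℕ} (x : Fin k → ℝ) : 0 ≤ euclNorm x := Real.sqrt_nonneg _

lemma enorm_le_l1norm {k : ℕ} (x : Fin k → ℝ) : euclNorm x ≤ l1norm x := by
  have h0 : (0:ℝ) ≤ l1norm x := Finset.sum_nonneg fun i _ => abs_nonneg _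
  have h : ∑ i, (x i)^2 ≤ (l1norm x)^2 := by
    have := Finset.sum_sq_le_sq_sum_of_nonneg (s := Finset.univ)
      (f := fun i => |x i|) (fun i _ => abs_nonneg _)
    simpa [l1norm, sq_abs] using this
  calc euclNorm x ≤ Real.sqrt ((l1norm x)^2) := Real.sqrt_le_sqrt h
    _ = l1norm x := Real.sqrt_sq h0

/-- Lemma 3.2: `Δq ≥ κ_q τ Ψ` with `κ_q = min{ζ/4, σ/τ₋₁}`, where `d = u + v`
(orthogonal decomposition), `Δq = -τ(gᵀd + ½ max{dᵀHd,0}) + ‖c‖₁`, and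
`Ψ = ‖u‖² + ‖c‖` if `‖u‖² ≥ κ_uv ‖v‖²`, `Ψ = ‖c‖` otherwise. -/
theorem stmt_3 (n m : ℕ) (σ ζ κuv τneg1 τ : ℝ)
    (hσ : σ ∈ Set.Ioo (0:ℝ) 1) (hζ : 0 < ζ) (hκuv : 0 < κuv)
    (hτneg1 : 0 < τneg1) (hτ : τ ∈ Set.Ioc 0 τneg1)
    (g u v : Fin n → ℝ) (huv : u ⬝ᵥ v = 0)
    (c : Fin m → ℝ) (H : Matrix (Fin n) (Fin n) ℝ)
    (Δq Ψ : ℝ)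
    (hΔq : Δq = -(τ * (g ⬝ᵥ (u + v) + (1/2) * max ((u + v) ⬝ᵥ H.mulVec (u + v)) 0))
        + l1norm c)
    (hΨ : Ψ = if κuv * (euclNorm v)^2 ≤ (euclNorm u)^2 then (euclNorm u)^2 + euclNorm c else euclNorm c)
    (h1 : (1/2) * τ * max ((u + v) ⬝ᵥ H.mulVec (u + v)) 0 + σ * l1norm c ≤ Δq)
    (h2 : κuv * (euclNorm v)^2 ≤ (euclNorm u)^2 →
      (1/4) * ζ * (euclNorm u)^2 ≤ (1/2) * ((u + v) ⬝ᵥ H.mulVec (u + v))) :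
    min (ζ/4) (σ/τneg1) * τ * Ψ ≤ Δq := by
  obtain ⟨hσ0, hσ1⟩ := hσ
  obtain ⟨hτ0, hττ⟩ := hτ
  set M := max ((u + v) ⬝ᵥ H.mulVec (u + v)) 0 with hM
  have hM0 : 0 ≤ M := le_max_right _ _
  have hcl : euclNorm c ≤ l1norm c := enorm_le_l1norm c
  have hc0 : 0 ≤ euclNorm c := enorm_nonneg' c
  have hu0 : (0:ℝ) ≤ (euclNorm u)^2 := sq_nonneg _
  have hκ1 : min (ζ/4) (σ/τneg1) ≤ ζ/4 := min_le_left _ _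
  have hκ2 : min (ζ/4) (σ/τneg1) ≤ σ/τneg1 := min_le_right _ _
  have hκ0 : 0 ≤ min (ζ/4) (σ/τneg1) :=
    le_min (by linarith) (div_nonneg hσ0.le hτneg1.le)
  -- κ τ ‖c‖ ≤ σ ‖c‖₁
  have hcbound : min (ζ/4) (σ/τneg1) * τ * euclNorm c ≤ σ * l1norm c := by
    have h3 : min (ζ/4) (σ/τneg1) * τ ≤ σ := by
      calc min (ζ/4) (σ/τneg1) * τ ≤ (σ/τneg1) * τ := mul_le_mul_of_nonneg_right hκ2 hτ0.le
        _ ≤ (σ/τneg1) * τneg1 := by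
            apply mul_le_mul_of_nonneg_left hττ (div_nonneg hσ0.le hτneg1.le)
        _ = σ := by field_simp
    calc min (ζ/4) (σ/τneg1) * τ * euclNorm c ≤ σ * euclNorm c := by
          apply mul_le_mul_of_nonneg_right h3 hc0
      _ ≤ σ * l1norm c := by nlinarith
  rw [hΨ]
  by_cases hcase : κuv * (euclNorm v)^2 ≤ (euclNorm u)^2
  · simp only [hcase, if_true]
    have hMu : ζ/2 * (euclNorm u)^2 ≤ M := by
      have := h2 hcase
      have : ζ/2 * (euclNorm u)^2 ≤ (u + v) ⬝ᵥ H.mulVec (u + v) := by linarith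
      exact this.trans (le_max_left _ _)
    have hub : min (ζ/4) (σ/τneg1) * τ * (euclNorm u)^2 ≤ (1/2) * τ * M := by
      calc min (ζ/4) (σ/τneg1) * τ * (euclNorm u)^2 ≤ (ζ/4) * τ * (euclNorm u)^2 := mul_le_mul_of_nonneg_right (mul_le_mul_of_nonneg_right hκ1 hτ0.le) hu0
        _ = (1/2) * τ * (ζ/2 * (euclNorm u)^2) := by ring
        _ ≤ (1/2) * τ * M := by nlinarith
    nlinarith
  · simp only [hcase, if_false]
    nlinarith
end

section
/- Let n, m be positive integers with m ≤ n, J a real m×n matrix of rank m, H a real n×n matrix, and ζ > 0 with uᵀHu ≥ ζ‖u‖² for all u with Ju = 0, so that the KKT matrix K = [[H, Jᵀ], [J, 0]] is invertible. Fix g ∈ ℝⁿ and c ∈ ℝᵐ and let (d, y) be the unique solution of H d + Jᵀ y = −g, J d = −c. Let (Ω, F, P) be a probability space and G : Ω → ℝⁿ a square-integrable random vector with E[G] = g and E[‖G − g‖²] ≤ M for some M ≥ 0, and let (D, Y) be the random vector solving H D + Jᵀ Y = −G, J D = −c. Then gᵀd ≥ E[GᵀD] ≥ gᵀd − ζ⁻¹M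 and E[DᵀHD] ≥ dᵀHd. -/
open Matrix MeasureTheory

/-- Dot product with a fixed vector, as a continuous linear map. -/
noncomputable def dotCLM {n : ℕ} (a : Fin n → ℝ) : (Fin n → ℝ) →L[ℝ] ℝ :=
  LinearMap.toContinuousLinearMap
    { toFun := fun x => a ⬝ᵥ x
      map_add' := fun x y => by simp [dotProduct, mul_add, Finset.sum_add_distrib]
      map_smul' := fun r x => by
        simp [dotProduct, Finset.mul_sum, mul_left_comm] }

lemma dotCLM_apply {n : ℕ} (a x : Fin n → ℝ) : dotCLM a x = a ⬝ᵥ x := rfl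

lemma integrable_dot {Ω : Type*} [MeasurableSpace Ω] (P : Measure Ω) {n : ℕ} (a : Fin n → ℝ)
    {f : Ω → Fin n → ℝ} (hf : Integrable f P) :
    Integrable (fun ω => a ⬝ᵥ f ω) P := by
  simpa [dotCLM_apply] using (dotCLM a).integrable_comp hf

lemma integral_dot {Ω : Type*} [MeasurableSpace Ω] (P : Measure Ω) {n : ℕ} (a : Fin n → ℝ)
    {f : Ω → Fin n → ℝ} (hf : Integrable f P) :
    ∫ ω, a ⬝ᵥ f ω ∂P = a ⬝ᵥ ∫ ω, f ω ∂P := by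
  simpa [dotCLM_apply] using (dotCLM a).integral_comp_comm hf

lemma dotProduct_self_nonneg' {n : ℕ} (x : Fin n → ℝ) : 0 ≤ x ⬝ᵥ x :=
  Finset.sum_nonneg fun i _ => mul_self_nonneg _

/-- Lemma 3.4: bounds on `E[GᵀD]` and `E[DᵀHD]` for the stochastic SQP step.
Here `u ⬝ᵥ u` is the squared Euclidean norm of `u` and
`∑ i, (G ω i - g i)^2` is the squared Euclidean norm `‖G ω - g‖²`. -/
theorem stmt_4 (n m : ℕ) (hn : 0 < n) (hm : 0 < m) (hmn : m ≤ n)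
    (J : Matrix (Fin m) (Fin n) ℝ) (hJ : J.rank = m)
    (H : Matrix (Fin n) (Fin n) ℝ) (ζ : ℝ) (hζ : 0 < ζ)
    (hH : ∀ u : Fin n → ℝ, J.mulVec u = 0 → ζ * (u ⬝ᵥ u) ≤ u ⬝ᵥ H.mulVec u)
    (g d : Fin n → ℝ) (c y : Fin m → ℝ)
    (hd1 : H.mulVec d + Jᵀ.mulVec y = -g) (hd2 : J.mulVec d = -c)
    (Ω : Type*) [MeasurableSpace Ω] (P : Measure Ω) [IsProbabilityMeasure P]
    (G : Ω → Fin n → ℝ) (hGmeas : Measurable G) (hGL2 : MemLp G 2 P)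
    (hGmean : ∫ ω, G ω ∂P = g)
    (M : ℝ) (hM : 0 ≤ M)
    (hGvar : ∫ ω, (∑ i, (G ω i - g i)^2) ∂P ≤ M)
    (D : Ω → Fin n → ℝ) (Y : Ω → Fin m → ℝ)
    (hD : ∀ ω, H.mulVec (D ω) + Jᵀ.mulVec (Y ω) = -(G ω) ∧ J.mulVec (D ω) = -c) :
    (∫ ω, (G ω ⬝ᵥ D ω) ∂P ≤ g ⬝ᵥ d) ∧
    (g ⬝ᵥ d - ζ⁻¹ * M ≤ ∫ ω, (G ω ⬝ᵥ D ω) ∂P) ∧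
    (d ⬝ᵥ H.mulVec d ≤ ∫ ω, (D ω ⬝ᵥ H.mulVec (D ω)) ∂P) := by
  classical
  set e : Ω → Fin n → ℝ := fun ω => G ω - g with he_def
  set u : Ω → Fin n → ℝ := fun ω => D ω - d with hu_def
  set v : Ω → Fin m → ℝ := fun ω => Y ω - y with hv_def
  -- the pointwise system for the centered quantities
  have hsys : ∀ ω, H *ᵥ (u ω) + Jᵀ *ᵥ (v ω) = -(e ω) ∧ J *ᵥ (u ω) = 0 := by
    intro ω
    obtain ⟨h1, h2⟩ := hD ω
    constructor
    · have : (H *ᵥ D ω + Jᵀ *ᵥ Y ω) - (H *ᵥ d + Jᵀ *ᵥ y) = -(G ω) - (-g) := by rw [h1, hd1]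
      simp only [hu_def, hv_def, he_def, mulVec_sub]
      rw [show H *ᵥ D ω - H *ᵥ d + (Jᵀ *ᵥ Y ω - Jᵀ *ᵥ y)
          = (H *ᵥ D ω + Jᵀ *ᵥ Y ω) - (H *ᵥ d + Jᵀ *ᵥ y) by abel, this]
      abel
    · simp only [hu_def, mulVec_sub, h2, hd2]
      abel
  have hJu : ∀ ω, J *ᵥ u ω = 0 := fun ω => (hsys ω).2
  -- key scalar identity : e ⬝ u = -(u ⬝ H u)
  have hdot : ∀ ω, e ω ⬝ᵥ u ω = -(u ω ⬝ᵥ H *ᵥ u ω) := by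
    intro ω
    have h1 : u ω ⬝ᵥ (H *ᵥ u ω + Jᵀ *ᵥ v ω) = u ω ⬝ᵥ (-(e ω)) := by rw [(hsys ω).1]
    have hJv : u ω ⬝ᵥ (Jᵀ *ᵥ v ω) = 0 := by
      rw [dotProduct_mulVec, vecMul_transpose, hJu ω, zero_dotProduct]
    rw [dotProduct_add, hJv, dotProduct_neg, dotProduct_comm (u ω) (e ω)] at h1
    linarith
  -- pointwise bounds on e ⬝ u
  have hbound : ∀ ω, -(ζ⁻¹ * (e ω ⬝ᵥ e ω)) ≤ e ω ⬝ᵥ u ω ∧ e ω ⬝ᵥ u ω ≤ 0 := by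
    intro ω
    have hq : (0:ℝ) ≤ u ω ⬝ᵥ u ω := dotProduct_self_nonneg' _
    have hs : (0:ℝ) ≤ e ω ⬝ᵥ e ω := dotProduct_self_nonneg' _
    have hHu : ζ * (u ω ⬝ᵥ u ω) ≤ u ω ⬝ᵥ H *ᵥ u ω := hH (u ω) (hJu ω)
    have heu : e ω ⬝ᵥ u ω = -(u ω ⬝ᵥ H *ᵥ u ω) := hdot ω
    have ht0 : 0 ≤ u ω ⬝ᵥ H *ᵥ u ω := le_trans (mul_nonneg hζ.le hq) hHu
    have hcs : (e ω ⬝ᵥ u ω)^2 ≤ (e ω ⬝ᵥ e ω) * (u ω ⬝ᵥ u ω) := by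
      have h := Finset.sum_mul_sq_le_sq_mul_sq Finset.univ (e ω) (u ω)
      simpa [dotProduct, pow_two] using h
    constructor
    · -- equivalent to u ⬝ H u ≤ ζ⁻¹ (e ⬝ e)
      have hkey : ζ * (u ω ⬝ᵥ H *ᵥ u ω) ≤ e ω ⬝ᵥ e ω := by
        rcases eq_or_lt_of_le ht0 with h | h
        · rw [← h, mul_zero]; exact hs
        · have hcs' : (u ω ⬝ᵥ H *ᵥ u ω)^2 ≤ (e ω ⬝ᵥ e ω) * (u ω ⬝ᵥ u ω) := by
            rw [heu, neg_sq] at hcs; exact hcs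
          nlinarith [hcs', hHu, hq, hs, h, mul_le_mul_of_nonneg_left hHu hs,
            mul_le_mul_of_nonneg_left hcs' hζ.le]
      have : u ω ⬝ᵥ H *ᵥ u ω ≤ ζ⁻¹ * (e ω ⬝ᵥ e ω) := by
        rw [← mul_le_mul_iff_right₀ hζ, show ζ * (ζ⁻¹ * (e ω ⬝ᵥ e ω)) = e ω ⬝ᵥ e ω by
          field_simp]
        exact hkey
      rw [heu]
      linarith
    · rw [heu]
      exact neg_nonpos.mpr ht0
  -- injectivity of Jᵀ.mulVecLin from the rank hypothesis
  have hJTinj : Function.Injective Jᵀ.mulVecLin := by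
    rw [← LinearMap.ker_eq_bot]
    have h1 := LinearMap.finrank_range_add_finrank_ker Jᵀ.mulVecLin
    have h2 : Jᵀ.rank = m := by rw [Matrix.rank_transpose]; exact hJ
    rw [Matrix.rank] at h2
    rw [h2, Module.finrank_fintype_fun_eq_card, Fintype.card_fin] at h1
    have h3 : Module.finrank ℝ (LinearMap.ker Jᵀ.mulVecLin) = 0 := by omega
    exact Submodule.finrank_eq_zero.mp h3
  -- the KKT matrix and its invertibility
  set K : Matrix (Fin n ⊕ Fin m) (Fin n ⊕ Fin m) ℝ := Matrix.fromBlocks H Jᵀ J 0 with hK_def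
  have hKinj : Function.Injective K.mulVecLin := by
    rw [← LinearMap.ker_eq_bot, LinearMap.ker_eq_bot']
    intro w hw
    have hwx : w = Sum.elim (w ∘ Sum.inl) (w ∘ Sum.inr) := by
      ext i; cases i <;> rfl
    have hm0 : K *ᵥ (Sum.elim (w ∘ Sum.inl) (w ∘ Sum.inr)) = 0 := by
      rw [← hwx]; exact hw
    rw [hK_def, Matrix.fromBlocks_mulVec, Sum.elim_comp_inl, Sum.elim_comp_inr] at hm0
    have h1 : H *ᵥ (w ∘ Sum.inl) + Jᵀ *ᵥ (w ∘ Sum.inr) = 0 := by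
      ext i; exact congrFun hm0 (Sum.inl i)
    have h2 : J *ᵥ (w ∘ Sum.inl) = 0 := by
      have := fun i => congrFun hm0 (Sum.inr i)
      ext i
      simpa [Matrix.zero_mulVec] using this i
    have hx : (w ∘ Sum.inl) = 0 := by
      have hd0 : (w ∘ Sum.inl) ⬝ᵥ H *ᵥ (w ∘ Sum.inl) = 0 := by
        have ha : (w ∘ Sum.inl) ⬝ᵥ (H *ᵥ (w ∘ Sum.inl) + Jᵀ *ᵥ (w ∘ Sum.inr)) = 0 := by
          rw [h1, dotProduct_zero]
        have hz : (w ∘ Sum.inl) ⬝ᵥ (Jᵀ *ᵥ (w ∘ Sum.inr)) = 0 := by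
          rw [dotProduct_mulVec, vecMul_transpose, h2, zero_dotProduct]
        rw [dotProduct_add, hz, add_zero] at ha
        exact ha
      have hq := hH (w ∘ Sum.inl) h2
      rw [hd0] at hq
      have hq2 : (w ∘ Sum.inl) ⬝ᵥ (w ∘ Sum.inl) = 0 := by
        have := dotProduct_self_nonneg' (w ∘ Sum.inl)
        nlinarith
      exact dotProduct_self_eq_zero.mp hq2
    have hz : (w ∘ Sum.inr) = 0 := by
      apply hJTinj
      have hJz : Jᵀ *ᵥ (w ∘ Sum.inr) = 0 := by
        rw [hx, Matrix.mulVec_zero, zero_add] at h1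
        exact h1
      simp only [Matrix.mulVecLin_apply, hJz, Matrix.mulVec_zero]
    rw [hwx, hx, hz]
    ext i; cases i <;> simp
  have hKbij : Function.Bijective K.mulVecLin :=
    ⟨hKinj, LinearMap.injective_iff_surjective.mp hKinj⟩
  set Keq : (Fin n ⊕ Fin m → ℝ) ≃ₗ[ℝ] (Fin n ⊕ Fin m → ℝ) :=
    LinearEquiv.ofBijective K.mulVecLin hKbij with hKeq_def
  -- u is a fixed continuous linear image of e
  have hA : ∃ A : (Fin n → ℝ) →L[ℝ] (Fin n → ℝ), ∀ ω, u ω = A (e ω) := by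
    set B : (Fin n → ℝ) →ₗ[ℝ] (Fin n ⊕ Fin m → ℝ) :=
      { toFun := fun w => Sum.elim (-w) 0
        map_add' := fun a b => by ext i; cases i <;> simp [neg_add, add_comm]
        map_smul' := fun r a => by ext i; cases i <;> simp } with hB_def
    set pr : (Fin n ⊕ Fin m → ℝ) →ₗ[ℝ] (Fin n → ℝ) := LinearMap.funLeft ℝ ℝ Sum.inl with hpr_def
    refine ⟨LinearMap.toContinuousLinearMap (pr ∘ₗ (Keq.symm.toLinearMap ∘ₗ B)), fun ω => ?_⟩
    have hKop : Keq (Sum.elim (u ω) (v ω)) = Sum.elim (-(e ω)) 0 := by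
      show K.mulVecLin (Sum.elim (u ω) (v ω)) = _
      rw [Matrix.mulVecLin_apply, hK_def, Matrix.fromBlocks_mulVec,
        Sum.elim_comp_inl, Sum.elim_comp_inr, (hsys ω).1, Matrix.zero_mulVec, add_zero,
        (hsys ω).2]
    have hsymm : Sum.elim (u ω) (v ω) = Keq.symm (Sum.elim (-(e ω)) 0) := by
      rw [← hKop, LinearEquiv.symm_apply_apply]
    have : u ω = (Keq.symm (Sum.elim (-(e ω)) 0)) ∘ Sum.inl := by
      rw [← hsymm, Sum.elim_comp_inl]
    rw [this]
    simp only [LinearMap.coe_toContinuousLinearMap', LinearMap.comp_apply, hB_def, hpr_def,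
      LinearMap.coe_mk, AddHom.coe_mk, LinearMap.funLeft_apply, LinearEquiv.coe_coe]
    rfl
  obtain ⟨A, hAu⟩ := hA
  -- integrability facts
  have he2 : MemLp e 2 P := hGL2.sub (memLp_const g)
  have heint : Integrable e P :=
    memLp_one_iff_integrable.mp (he2.mono_exponent (by norm_num))
  have hGint : Integrable G P :=
    memLp_one_iff_integrable.mp (hGL2.mono_exponent (by norm_num))
  have huA : u = fun ω => A (e ω) := funext hAu
  have hu2 : MemLp u 2 P := by rw [huA]; exact A.comp_memLp' he2
  have huint : Integrable u P :=
    memLp_one_iff_integrable.mp (hu2.mono_exponent (by norm_num))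
  -- mean-zero facts
  have hinte : ∫ ω, e ω ∂P = 0 := by
    simp only [he_def]
    rw [integral_sub hGint (integrable_const g), hGmean, integral_const]
    simp
  have hintu : ∫ ω, u ω ∂P = 0 := by
    rw [huA, A.integral_comp_comm heint, hinte, map_zero]
  -- integrability of the scalar products
  have hcoord : ∀ (k : ℕ) (f : Ω → Fin k → ℝ) (_ : MemLp f 2 P) (i : Fin k),
      MemLp (fun ω => f ω i) 2 P := by
    intro k f hf i
    have := (ContinuousLinearMap.proj (R := ℝ) (φ := fun _ : Fin k => ℝ) i).comp_memLp' hf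
    exact this
  have hmul : ∀ (f h : Ω → Fin n → ℝ), MemLp f 2 P → MemLp h 2 P →
      Integrable (fun ω => f ω ⬝ᵥ h ω) P := by
    intro f h hf hh
    have : ∀ i : Fin n, Integrable (fun ω => f ω i * h ω i) P := by
      intro i
      have h1 : MemLp ((fun ω => f ω i) • (fun ω => h ω i)) 1 P :=
        (hcoord n h hh i).smul (hcoord n f hf i)
      have := memLp_one_iff_integrable.mp h1
      exact this
    have hsum := integrable_finset_sum (μ := P) Finset.univ (fun i _ => this i)
    simpa [dotProduct] using hsum
  have heu_int : Integrable (fun ω => e ω ⬝ᵥ u ω) P := hmul e u he2 hu2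
  have hee_int : Integrable (fun ω => e ω ⬝ᵥ e ω) P := hmul e e he2 he2
  have hgu_int : Integrable (fun ω => g ⬝ᵥ u ω) P := integrable_dot P g huint
  have hde_int : Integrable (fun ω => d ⬝ᵥ e ω) P := integrable_dot P d heint
  -- expansion of G ⬝ D
  have hGe : ∀ ω, G ω = g + e ω := fun ω => by simp [he_def]
  have hDu : ∀ ω, D ω = d + u ω := fun ω => by simp [hu_def]
  have hGD : ∀ ω, G ω ⬝ᵥ D ω = g ⬝ᵥ d + g ⬝ᵥ u ω + d ⬝ᵥ e ω + e ω ⬝ᵥ u ω := by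
    intro ω
    rw [hGe ω, hDu ω, add_dotProduct, dotProduct_add, dotProduct_add,
      dotProduct_comm (e ω) d]
    ring
  have key : ∫ ω, (G ω ⬝ᵥ D ω) ∂P = g ⬝ᵥ d + ∫ ω, e ω ⬝ᵥ u ω ∂P := by
    have h0 : Integrable (fun _ : Ω => g ⬝ᵥ d) P := integrable_const _
    calc ∫ ω, (G ω ⬝ᵥ D ω) ∂P
        = ∫ ω, (g ⬝ᵥ d + g ⬝ᵥ u ω + d ⬝ᵥ e ω + e ω ⬝ᵥ u ω) ∂P := by
          exact integral_congr_ae (Filter.Eventually.of_forall fun ω => hGD ω)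
      _ = g ⬝ᵥ d + ∫ ω, e ω ⬝ᵥ u ω ∂P := by
          have h01 : Integrable (fun ω => g ⬝ᵥ d + g ⬝ᵥ u ω) P := h0.add hgu_int
          have h012 : Integrable (fun ω => g ⬝ᵥ d + g ⬝ᵥ u ω + d ⬝ᵥ e ω) P :=
            h01.add hde_int
          rw [integral_add h012 heu_int, integral_add h01 hde_int,
            integral_add h0 hgu_int, integral_const, integral_dot P g huint,
            integral_dot P d heint, hintu, hinte]
          simp
  -- bounds on the error integral
  have hI_le : ∫ ω, e ω ⬝ᵥ u ω ∂P ≤ 0 :=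
    integral_nonpos fun ω => (hbound ω).2
  have hvar : ∫ ω, e ω ⬝ᵥ e ω ∂P ≤ M := by
    have hco : ∀ ω, e ω ⬝ᵥ e ω = ∑ i, (G ω i - g i)^2 := by
      intro ω; simp [dotProduct, he_def, pow_two]
    calc ∫ ω, e ω ⬝ᵥ e ω ∂P = ∫ ω, (∑ i, (G ω i - g i)^2) ∂P :=
          integral_congr_ae (Filter.Eventually.of_forall fun ω => hco ω)
      _ ≤ M := hGvar
  have hI_ge : -(ζ⁻¹ * M) ≤ ∫ ω, e ω ⬝ᵥ u ω ∂P := by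
    have h1 : ∫ ω, -(ζ⁻¹ * (e ω ⬝ᵥ e ω)) ∂P ≤ ∫ ω, e ω ⬝ᵥ u ω ∂P :=
      integral_mono ((hee_int.const_mul ζ⁻¹).neg) heu_int fun ω => (hbound ω).1
    have h2 : ∫ ω, -(ζ⁻¹ * (e ω ⬝ᵥ e ω)) ∂P = -(ζ⁻¹ * ∫ ω, e ω ⬝ᵥ e ω ∂P) := by
      rw [integral_neg, integral_const_mul]
    have h3 : ζ⁻¹ * ∫ ω, e ω ⬝ᵥ e ω ∂P ≤ ζ⁻¹ * M :=
      mul_le_mul_of_nonneg_left hvar (inv_nonneg.mpr hζ.le)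
    linarith
  -- expansion of D ⬝ H D
  have hHd_int : Integrable (fun ω => (d ᵥ* H) ⬝ᵥ u ω) P := integrable_dot P _ huint
  have hdH_int : Integrable (fun ω => (H *ᵥ d) ⬝ᵥ u ω) P := integrable_dot P _ huint
  have hDHD : ∀ ω, D ω ⬝ᵥ H *ᵥ D ω
      = d ⬝ᵥ H *ᵥ d + (d ᵥ* H) ⬝ᵥ u ω + (H *ᵥ d) ⬝ᵥ u ω - e ω ⬝ᵥ u ω := by
    intro ω
    have h1 : D ω ⬝ᵥ H *ᵥ D ω = d ⬝ᵥ H *ᵥ d + d ⬝ᵥ H *ᵥ u ω + u ω ⬝ᵥ H *ᵥ d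
        + u ω ⬝ᵥ H *ᵥ u ω := by
      rw [hDu ω, Matrix.mulVec_add, add_dotProduct, dotProduct_add, dotProduct_add]
      ring
    have h2 : e ω ⬝ᵥ u ω = -(u ω ⬝ᵥ H *ᵥ u ω) := hdot ω
    have h3 : d ⬝ᵥ H *ᵥ u ω = (d ᵥ* H) ⬝ᵥ u ω := dotProduct_mulVec d H (u ω)
    have h4 : u ω ⬝ᵥ H *ᵥ d = (H *ᵥ d) ⬝ᵥ u ω := dotProduct_comm _ _
    linarith
  have key2 : ∫ ω, (D ω ⬝ᵥ H *ᵥ D ω) ∂P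
      = d ⬝ᵥ H *ᵥ d - ∫ ω, e ω ⬝ᵥ u ω ∂P := by
    have h0 : Integrable (fun _ : Ω => d ⬝ᵥ H *ᵥ d) P := integrable_const _
    calc ∫ ω, (D ω ⬝ᵥ H *ᵥ D ω) ∂P
        = ∫ ω, (d ⬝ᵥ H *ᵥ d + (d ᵥ* H) ⬝ᵥ u ω + (H *ᵥ d) ⬝ᵥ u ω - e ω ⬝ᵥ u ω) ∂P :=
          integral_congr_ae (Filter.Eventually.of_forall fun ω => hDHD ω)
      _ = d ⬝ᵥ H *ᵥ d - ∫ ω, e ω ⬝ᵥ u ω ∂P := by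
          have h01 : Integrable (fun ω => d ⬝ᵥ H *ᵥ d + (d ᵥ* H) ⬝ᵥ u ω) P :=
            h0.add hHd_int
          have h012 : Integrable (fun ω => d ⬝ᵥ H *ᵥ d + (d ᵥ* H) ⬝ᵥ u ω
              + (H *ᵥ d) ⬝ᵥ u ω) P := h01.add hdH_int
          rw [integral_sub h012 heu_int, integral_add h01 hdH_int,
            integral_add h0 hHd_int, integral_const, integral_dot P _ huint,
            integral_dot P _ huint, hintu]
          simp
  refine ⟨?_, ?_, ?_⟩
  · rw [key]; linarith
  · rw [key]; linarith
  · rw [key2]; linarith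
end

section
/- Let n, m be positive integers with m ≤ n, let J be a real m×n matrix of rank m, let H be a real symmetric positive definite n×n matrix, and fix g ∈ ℝⁿ and c ∈ ℝᵐ. Let (d, y) be the unique solution of H d + Jᵀ y = −g, J d = −c. Let (Ω, F, P) be a probability space and G : Ω → ℝⁿ a random vector such that G − g and −(G − g) are identically distributed, and let (D, Y) be the random vector solving H D + Jᵀ Y = −G, J D = −c. Then P[ GᵀD + max{DᵀHD, 0} ≥ gᵀd + max{dᵀHd, 0} ] ≥ 1/2. -/
open Matrix MeasureTheory
open scoped ENNReal

/-- Lemma 3.12: for symmetric gradient noise, the stochastic curvature-plus-slope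
quantity is at least its deterministic counterpart with probability at least 1/2. -/
theorem stmt_6 (n m : ℕ) (hn : 0 < n) (hm : 0 < m) (hmn : m ≤ n)
    (J : Matrix (Fin m) (Fin n) ℝ) (hJ : J.rank = m)
    (H : Matrix (Fin n) (Fin n) ℝ) (hH : H.PosDef)
    (g d : Fin n → ℝ) (c y : Fin m → ℝ)
    (hd1 : H.mulVec d + Jᵀ.mulVec y = -g) (hd2 : J.mulVec d = -c)
    (Ω : Type*) [MeasurableSpace Ω] (P : Measure Ω) [IsProbabilityMeasure P]
    (G : Ω → Fin n → ℝ) (hGmeas : Measurable G)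
    (hsymm : Measure.map (fun ω => G ω - g) P = Measure.map (fun ω => -(G ω - g)) P)
    (D : Ω → Fin n → ℝ) (Y : Ω → Fin m → ℝ)
    (hD : ∀ ω, H.mulVec (D ω) + Jᵀ.mulVec (Y ω) = -(G ω) ∧ J.mulVec (D ω) = -c) :
    (1 : ℝ≥0∞) / 2 ≤
      P {ω | g ⬝ᵥ d + max (d ⬝ᵥ H.mulVec d) 0 ≤
             G ω ⬝ᵥ D ω + max (D ω ⬝ᵥ H.mulVec (D ω)) 0} := by
  classical
  -- positive semidefiniteness: drop the max's
  have hpsd : ∀ v : Fin n → ℝ, 0 ≤ v ⬝ᵥ H.mulVec v := by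
    intro v
    have := hH.posSemidef.dotProduct_mulVec_nonneg v
    simpa using this
  have hmax : ∀ v : Fin n → ℝ, max (v ⬝ᵥ H.mulVec v) 0 = v ⬝ᵥ H.mulVec v :=
    fun v => max_eq_left (hpsd v)
  -- symmetry of H
  have hsymH : ∀ v w : Fin n → ℝ, v ⬝ᵥ H.mulVec w = w ⬝ᵥ H.mulVec v := by
    intro v w
    have hHt : Hᵀ = H := hH.1
    calc v ⬝ᵥ H.mulVec w = v ᵥ* H ⬝ᵥ w := dotProduct_mulVec _ _ _
      _ = v ᵥ* Hᵀ ⬝ᵥ w := by rw [hHt]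
      _ = (H *ᵥ v) ⬝ᵥ w := by rw [vecMul_transpose]
      _ = w ⬝ᵥ H.mulVec v := dotProduct_comm _ _
  -- dot product exchange across Jᵀ
  have hJdot : ∀ (v : Fin n → ℝ) (w : Fin m → ℝ),
      v ⬝ᵥ Jᵀ.mulVec w = (J.mulVec v) ⬝ᵥ w := by
    intro v w
    rw [dotProduct_mulVec, vecMul_transpose]
  -- injectivity of Jᵀ.mulVec
  have hJTinj : Function.Injective (Jᵀ.mulVecLin) := by
    rw [← LinearMap.ker_eq_bot]
    have h1 : Jᵀ.rank = m := by rw [Matrix.rank_transpose]; exact hJ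
    have h2 := LinearMap.finrank_range_add_finrank_ker (Jᵀ.mulVecLin)
    rw [Matrix.rank] at h1
    have h3 : Module.finrank ℝ (Fin m → ℝ) = m := by
      simp [Module.finrank_fin_fun]
    rw [h3, h1] at h2
    have h4 : Module.finrank ℝ (LinearMap.ker Jᵀ.mulVecLin) = 0 := by omega
    exact Submodule.finrank_eq_zero.1 h4
  -- the KKT linear map
  set T : ((Fin n → ℝ) × (Fin m → ℝ)) →ₗ[ℝ] ((Fin n → ℝ) × (Fin m → ℝ)) :=
    LinearMap.prod
      (H.mulVecLin.comp (LinearMap.fst ℝ _ _) + Jᵀ.mulVecLin.comp (LinearMap.snd ℝ _ _))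
      (J.mulVecLin.comp (LinearMap.fst ℝ _ _)) with hT
  have hTapp : ∀ p : (Fin n → ℝ) × (Fin m → ℝ),
      T p = (H.mulVec p.1 + Jᵀ.mulVec p.2, J.mulVec p.1) := fun p => rfl
  have hker : ∀ p : (Fin n → ℝ) × (Fin m → ℝ), T p = 0 → p = 0 := by
    rintro ⟨x, z⟩ hp
    rw [hTapp] at hp
    have h1 : H.mulVec x + Jᵀ.mulVec z = 0 := congrArg Prod.fst hp
    have h2 : J.mulVec x = 0 := congrArg Prod.snd hp
    have hx : x = 0 := by
      by_contra hx0
      have hpos := hH.dotProduct_mulVec_pos hx0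
      simp only [star_trivial] at hpos
      have : x ⬝ᵥ (H.mulVec x + Jᵀ.mulVec z) = 0 := by rw [h1]; simp
      rw [dotProduct_add, hJdot, h2, zero_dotProduct] at this
      linarith
    have hz : Jᵀ.mulVec z = 0 := by
      rw [hx, Matrix.mulVec_zero, zero_add] at h1; exact h1
    have hz0 : z = 0 := by
      apply hJTinj
      have : Jᵀ.mulVecLin z = Jᵀ.mulVecLin 0 := by
        rw [Matrix.mulVecLin_apply, Matrix.mulVecLin_apply, Matrix.mulVec_zero]
        exact hz
      exact this
    simp [hx, hz0]
  have hTinj : Function.Injective T := by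
    rw [← LinearMap.ker_eq_bot, LinearMap.ker_eq_bot']
    exact hker
  have hTsurj : Function.Surjective T := LinearMap.injective_iff_surjective.mp hTinj
  set E : ((Fin n → ℝ) × (Fin m → ℝ)) ≃ₗ[ℝ] ((Fin n → ℝ) × (Fin m → ℝ)) :=
    LinearEquiv.ofBijective T ⟨hTinj, hTsurj⟩ with hE
  -- the solution map
  set sol : (Fin n → ℝ) → (Fin n → ℝ) := fun a => (E.symm (-a, -c)).1 with hsol
  have hsol_eq : ∀ (a x : Fin n → ℝ) (z : Fin m → ℝ),
      H.mulVec x + Jᵀ.mulVec z = -a → J.mulVec x = -c → sol a = x := by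
    intro a x z h1 h2
    have hE' : E (x, z) = (-a, -c) := by
      show T (x, z) = (-a, -c)
      rw [hTapp]; simp [h1, h2]
    have hxz : (x, z) = E.symm (-a, -c) := by
      have := congrArg E.symm hE'
      rwa [LinearEquiv.symm_apply_apply] at this
    show (E.symm (-a, -c)).1 = x
    rw [← hxz]
  -- every sol a is a solution
  have hsol_sol : ∀ a : Fin n → ℝ,
      H.mulVec (sol a) + Jᵀ.mulVec ((E.symm (-a, -c)).2) = -a ∧
      J.mulVec (sol a) = -c := by
    intro a
    have hTe : T (E.symm (-a, -c)) = (-a, -c) := E.apply_symm_apply _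
    have h := hTapp (E.symm (-a, -c))
    rw [hTe] at h
    exact ⟨(congrArg Prod.fst h).symm, (congrArg Prod.snd h).symm⟩
  -- key orthogonality fact
  have horth : ∀ (u Δ : Fin n → ℝ) (w : Fin m → ℝ),
      H.mulVec Δ + Jᵀ.mulVec w = -u → J.mulVec Δ = 0 →
      u ⬝ᵥ Δ + Δ ⬝ᵥ H.mulVec Δ = 0 := by
    intro u Δ w h1 h2
    have : Δ ⬝ᵥ (H.mulVec Δ + Jᵀ.mulVec w) = Δ ⬝ᵥ (-u) := by rw [h1]
    rw [dotProduct_add, hJdot, h2, zero_dotProduct, add_zero, dotProduct_neg] at this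
    have hc : Δ ⬝ᵥ u = u ⬝ᵥ Δ := dotProduct_comm _ _
    linarith [hsymH Δ Δ]
  -- objective function
  set ψ : (Fin n → ℝ) → ℝ := fun a => a ⬝ᵥ sol a + (sol a) ⬝ᵥ H.mulVec (sol a) with hψ
  have hsolg : sol g = d := hsol_eq g d y hd1 hd2
  have hψg : ψ g = g ⬝ᵥ d + d ⬝ᵥ H.mulVec d := by
    rw [hψ]; simp only [hsolg]
  -- the key reflection identity
  have hsum : ∀ a : Fin n → ℝ, ψ a + ψ (g + g - a) = 2 * ψ g := by
    intro a
    obtain ⟨ha1, ha2⟩ := hsol_sol a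
    obtain ⟨hb1, hb2⟩ := hsol_sol (g + g - a)
    -- sol a + sol (g+g-a) = 2d, by injectivity
    have h0 : T (sol a + sol (g + g - a) - (d + d),
        (E.symm (-a, -c)).2 + (E.symm (-(g + g - a), -c)).2 - (y + y)) = 0 := by
      rw [hTapp]
      simp only [Prod.mk_eq_zero]
      constructor
      · have heq : H.mulVec (sol a + sol (g + g - a) - (d + d)) +
            Jᵀ.mulVec ((E.symm (-a, -c)).2 + (E.symm (-(g + g - a), -c)).2 - (y + y)) =
            (H.mulVec (sol a) + Jᵀ.mulVec ((E.symm (-a, -c)).2)) +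
              (H.mulVec (sol (g + g - a)) + Jᵀ.mulVec ((E.symm (-(g + g - a), -c)).2))
                - ((H.mulVec d + Jᵀ.mulVec y) + (H.mulVec d + Jᵀ.mulVec y)) := by
          simp only [Matrix.mulVec_add, Matrix.mulVec_sub]
          abel
        rw [heq, ha1, hb1, hd1]
        abel
      · have heq : J.mulVec (sol a + sol (g + g - a) - (d + d)) =
            J.mulVec (sol a) + J.mulVec (sol (g + g - a)) - (J.mulVec d + J.mulVec d) := by
          simp only [Matrix.mulVec_add, Matrix.mulVec_sub]
        rw [heq, ha2, hb2, hd2]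
        abel
    have hxx := hker _ h0
    have hxx1 : sol a + sol (g + g - a) - (d + d) = 0 := congrArg Prod.fst hxx
    have hx' : sol (g + g - a) = d + d - sol a := by
      funext i
      have := congrFun hxx1 i
      simp only [Pi.sub_apply, Pi.add_apply, Pi.zero_apply] at this ⊢
      linarith
    -- orthogonality for sol a
    have hor : (a - g) ⬝ᵥ (sol a - d) + (sol a - d) ⬝ᵥ H.mulVec (sol a - d) = 0 := by
      apply horth (a - g) (sol a - d) ((E.symm (-a, -c)).2 - y)
      · rw [Matrix.mulVec_sub, Matrix.mulVec_sub]
        have heq : H.mulVec (sol a) - H.mulVec d +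
            (Jᵀ.mulVec ((E.symm (-a, -c)).2) - Jᵀ.mulVec y) =
            (H.mulVec (sol a) + Jᵀ.mulVec ((E.symm (-a, -c)).2)) -
              (H.mulVec d + Jᵀ.mulVec y) := by abel
        rw [heq, ha1, hd1]
        abel
      · rw [Matrix.mulVec_sub, ha2, hd2]; simp
    rw [hψ]
    simp only [hx', hsolg]
    simp only [sub_dotProduct, dotProduct_sub, add_dotProduct, dotProduct_add,
      Matrix.mulVec_add, Matrix.mulVec_sub] at hor ⊢
    have h1 := hsymH (sol a) d
    linarith
  -- continuity of ψ
  have hcont : Continuous ψ := by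
    have hE' : Continuous (fun p : (Fin n → ℝ) × (Fin m → ℝ) => E.symm p) :=
      LinearMap.continuous_of_finiteDimensional E.symm.toLinearMap
    have hsolc : Continuous sol := by
      have hc : Continuous fun a : Fin n → ℝ => ((-a, -c) : (Fin n → ℝ) × (Fin m → ℝ)) :=
        (continuous_neg.comp continuous_id).prodMk continuous_const
      exact continuous_fst.comp (hE'.comp hc)
    have hdot : ∀ (f h : (Fin n → ℝ) → (Fin n → ℝ)), Continuous f → Continuous h →
        Continuous (fun a => f a ⬝ᵥ h a) := by
      intro f h hf hh
      simp only [dotProduct]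
      exact continuous_finset_sum _ fun i _ =>
        ((continuous_apply i).comp hf).mul ((continuous_apply i).comp hh)
    have hmul : Continuous fun a => H.mulVec (sol a) := by
      have hHc : Continuous fun v : Fin n → ℝ => H.mulVec v :=
        LinearMap.continuous_of_finiteDimensional H.mulVecLin
      exact hHc.comp hsolc
    exact (hdot _ _ continuous_id hsolc).add (hdot _ _ hsolc hmul)
  -- the symmetric set
  set S : Set (Fin n → ℝ) := {v | ψ g ≤ ψ (g + v)} with hS
  have hSmeas : MeasurableSet S := by
    have : IsClosed S :=
      isClosed_le continuous_const (hcont.comp (continuous_const.add continuous_id))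
    exact this.measurableSet
  have hmeas1 : Measurable fun ω => G ω - g := hGmeas.sub measurable_const
  have hmeas2 : Measurable fun ω => -(G ω - g) := hmeas1.neg
  -- the event equals the preimage of S
  have hDω : ∀ ω, sol (G ω) = D ω := fun ω => hsol_eq _ _ (Y ω) (hD ω).1 (hD ω).2
  have hevent : {ω | g ⬝ᵥ d + max (d ⬝ᵥ H.mulVec d) 0 ≤
      G ω ⬝ᵥ D ω + max (D ω ⬝ᵥ H.mulVec (D ω)) 0} = (fun ω => G ω - g) ⁻¹' S := by
    ext ω
    simp only [Set.mem_setOf_eq, Set.mem_preimage, hS, hmax]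
    have h1 : g + (G ω - g) = G ω := by funext i; simp
    rw [h1, hψg, hψ]
    simp only [hDω ω]
  rw [hevent]
  -- symmetry gives the two events equal measure
  have hmapeq : P ((fun ω => G ω - g) ⁻¹' S) = P ((fun ω => -(G ω - g)) ⁻¹' S) := by
    rw [← Measure.map_apply hmeas1 hSmeas, hsymm, Measure.map_apply hmeas2 hSmeas]
  -- the two events cover everything
  have hcover : (Set.univ : Set Ω) ⊆
      ((fun ω => G ω - g) ⁻¹' S) ∪ ((fun ω => -(G ω - g)) ⁻¹' S) := by
    intro ω _
    have hs := hsum (G ω)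
    have h1 : g + (G ω - g) = G ω := by funext i; simp
    have h2 : g + -(G ω - g) = g + g - G ω := by funext i; simp; ring
    rcases le_or_gt (ψ g) (ψ (G ω)) with h | h
    · left
      simp only [Set.mem_preimage, hS, Set.mem_setOf_eq, h1]
      exact h
    · right
      simp only [Set.mem_preimage, hS, Set.mem_setOf_eq, h2]
      linarith
  have h1le : (1 : ℝ≥0∞) ≤ P ((fun ω => G ω - g) ⁻¹' S) + P ((fun ω => -(G ω - g)) ⁻¹' S) := by
    calc (1 : ℝ≥0∞) = P Set.univ := (measure_univ).symm
      _ ≤ P (((fun ω => G ω - g) ⁻¹' S) ∪ ((fun ω => -(G ω - g)) ⁻¹' S)) :=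
          measure_mono hcover
      _ ≤ _ := measure_union_le _ _
  rw [← hmapeq] at h1le
  rw [ENNReal.div_le_iff_le_mul (Or.inl two_ne_zero) (Or.inl (by norm_num))]
  calc (1 : ℝ≥0∞) ≤ P ((fun ω => G ω - g) ⁻¹' S) + P ((fun ω => G ω - g) ⁻¹' S) := h1le
    _ = P ((fun ω => G ω - g) ⁻¹' S) * 2 := by rw [mul_two]
end

section
/- Let f : ℝⁿ → ℝ be differentiable with L-Lipschitz gradient, and let c : ℝⁿ → ℝᵐ be differentiable such that for each i ∈ {1, …, m} the gradient ∇c_i is Lipschitz with constant γ_i; set Γ := γ_1 + ⋯ + γ_m. Define φ(x, τ) := τ f(x) + ‖c(x)‖₁ for τ > 0. Let x, d ∈ ℝⁿ satisfy c(x) + J(x)d = 0, where J(x) is the Jacobian of c at x. Then for every α ∈ [0, 1] and τ > 0: φ(x + αd, τ) − φ(x, τ) ≤ α τ ∇f(x)ᵀd − α‖c(x)‖₁ + ½(τL + Γ)α²‖d‖². -/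
open RealInnerProductSpace

lemma quad_upper {E : Type*} [NormedAddCommGroup E] [InnerProductSpace ℝ E] [CompleteSpace E]
    (g : E → ℝ) (hg : Differentiable ℝ g) (K : ℝ)
    (hK : ∀ a b, ‖gradient g a - gradient g b‖ ≤ K * ‖a - b‖) (x v : E) :
    |g (x + v) - g x - ⟪gradient g x, v⟫| ≤ K / 2 * ‖v‖ ^ 2 := by
  -- derivative of t ↦ g (x + t • v)
  have hderiv : ∀ t : ℝ, HasDerivAt (fun t : ℝ => g (x + t • v))
      ⟪gradient g (x + t • v), v⟫ t := by
    intro t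
    have hcurve : HasDerivAt (fun t : ℝ => x + t • v) v t := by
      have := ((hasDerivAt_id t).smul_const v).const_add x
      simpa using this
    have hfd := (hg (x + t • v)).hasGradientAt.hasFDerivAt
    have := hfd.comp_hasDerivAt t hcurve
    exact this.congr_deriv (by simp [InnerProductSpace.toDual_apply_apply])
  -- continuity of the integrand
  have lip : LipschitzWith (Real.toNNReal K) (gradient g) := by
    apply LipschitzWith.of_dist_le_mul
    intro a b
    rw [dist_eq_norm, dist_eq_norm]
    refine (hK a b).trans ?_
    have : K ≤ (Real.toNNReal K : ℝ) := by
      rw [Real.coe_toNNReal']; exact le_max_left _ _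
    exact mul_le_mul_of_nonneg_right this (norm_nonneg _)
  have hcont : Continuous fun t : ℝ => ⟪gradient g (x + t • v), v⟫ := by
    exact Continuous.inner
      (lip.continuous.comp (continuous_const.add (continuous_id.smul continuous_const)))
      continuous_const
  have key : ∫ t in (0:ℝ)..1, ⟪gradient g (x + t • v), v⟫ = g (x + v) - g x := by
    have := intervalIntegral.integral_eq_sub_of_hasDerivAt
      (f := fun t : ℝ => g (x + t • v)) (fun t _ => hderiv t)
      (hcont.intervalIntegrable 0 1)
    simpa using this
  have hconst : ∫ t in (0:ℝ)..1, ⟪gradient g x, v⟫ = ⟪gradient g x, v⟫ := by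
    simp
  have hsplit : g (x + v) - g x - ⟪gradient g x, v⟫
      = ∫ t in (0:ℝ)..1, (⟪gradient g (x + t • v), v⟫ - ⟪gradient g x, v⟫) := by
    rw [intervalIntegral.integral_sub (hcont.intervalIntegrable 0 1)
      (intervalIntegrable_const (c := ⟪gradient g x, v⟫)), key, hconst]
  have hptbound : ∀ t ∈ Set.Icc (0:ℝ) 1,
      |⟪gradient g (x + t • v), v⟫ - ⟪gradient g x, v⟫| ≤ K * t * ‖v‖ ^ 2 := by
    intro t ht
    have h1 : ⟪gradient g (x + t • v), v⟫ - ⟪gradient g x, v⟫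
        = ⟪gradient g (x + t • v) - gradient g x, v⟫ := by
      rw [inner_sub_left]
    rw [h1]
    refine (abs_real_inner_le_norm _ _).trans ?_
    have h2 : ‖gradient g (x + t • v) - gradient g x‖ ≤ K * t * ‖v‖ := by
      have := hK (x + t • v) x
      simpa [norm_smul, abs_of_nonneg ht.1, mul_assoc] using this
    calc ‖gradient g (x + t • v) - gradient g x‖ * ‖v‖
        ≤ K * t * ‖v‖ * ‖v‖ := mul_le_mul_of_nonneg_right h2 (norm_nonneg _)
      _ = K * t * ‖v‖ ^ 2 := by ring
  have hcont2 : Continuous fun t : ℝ => |⟪gradient g (x + t • v), v⟫ - ⟪gradient g x, v⟫| :=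
    (hcont.sub continuous_const).abs
  have hint2 : ∫ t in (0:ℝ)..1, K * t * ‖v‖ ^ 2 = K / 2 * ‖v‖ ^ 2 := by
    have : ∀ t : ℝ, K * t * ‖v‖ ^ 2 = (K * ‖v‖ ^ 2) * t := by intro t; ring
    simp only [this]
    rw [intervalIntegral.integral_const_mul, integral_id]
    ring
  rw [hsplit]
  refine (intervalIntegral.abs_integral_le_integral_abs (by norm_num)).trans ?_
  rw [← hint2]
  apply intervalIntegral.integral_mono_on (by norm_num)
    (hcont2.intervalIntegrable 0 1)
    ((by continuity : Continuous fun t : ℝ => K * t * ‖v‖ ^ 2).intervalIntegrable 0 1)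
  exact hptbound

/-- The merit-function descent inequality underlying Lemma 3.5:
for `φ(x,τ) = τ f(x) + ‖c(x)‖₁` and a direction `d` with `c(x) + J(x)d = 0`,
`φ(x+αd,τ) - φ(x,τ) ≤ ατ ∇f(x)ᵀd - α‖c(x)‖₁ + ½(τL+Γ)α²‖d‖²`. -/
theorem stmt_8 (n m : ℕ) (L : ℝ) (γ : Fin m → ℝ)
    (f : EuclideanSpace ℝ (Fin n) → ℝ) (hf : Differentiable ℝ f)
    (hfL : ∀ x y, ‖gradient f x - gradient f y‖ ≤ L * ‖x - y‖)
    (c : EuclideanSpace ℝ (Fin n) → Fin m → ℝ)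
    (hc : ∀ i, Differentiable ℝ (fun x => c x i))
    (hcL : ∀ i, ∀ x y, ‖gradient (fun z => c z i) x - gradient (fun z => c z i) y‖
      ≤ γ i * ‖x - y‖)
    (x d : EuclideanSpace ℝ (Fin n))
    (hlin : ∀ i, c x i + ⟪gradient (fun z => c z i) x, d⟫ = 0) :
    ∀ α ∈ Set.Icc (0:ℝ) 1, ∀ τ > (0:ℝ),
      (τ * f (x + α • d) + ∑ i, |c (x + α • d) i|) - (τ * f x + ∑ i, |c x i|) ≤
        α * τ * ⟪gradient f x, d⟫ - α * ∑ i, |c x i|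
          + (1/2) * (τ * L + ∑ i, γ i) * α^2 * ‖d‖^2 := by
  intro α hα τ hτ
  obtain ⟨hα0, hα1⟩ := hα
  have hnorm : ‖α • d‖ ^ 2 = α ^ 2 * ‖d‖ ^ 2 := by
    rw [norm_smul, mul_pow, Real.norm_eq_abs, sq_abs]
  -- f part
  have hfquad := quad_upper f hf L hfL x (α • d)
  have hfpart : f (x + α • d) - f x ≤ α * ⟪gradient f x, d⟫ + L / 2 * α ^ 2 * ‖d‖ ^ 2 := by
    have h1 : f (x + α • d) - f x - ⟪gradient f x, α • d⟫ ≤ L / 2 * ‖α • d‖ ^ 2 :=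
      (abs_le.mp hfquad).2
    rw [real_inner_smul_right, hnorm] at h1
    linarith
  -- c part
  have hcpart : ∀ i, |c (x + α • d) i| ≤ (1 - α) * |c x i| + γ i / 2 * α ^ 2 * ‖d‖ ^ 2 := by
    intro i
    have hq := quad_upper (fun z => c z i) (hc i) (γ i) (hcL i) x (α • d)
    have h1 : |c (x + α • d) i - c x i - ⟪gradient (fun z => c z i) x, α • d⟫|
        ≤ γ i / 2 * (α ^ 2 * ‖d‖ ^ 2) := by rw [← hnorm]; exact hq
    have h2 : ⟪gradient (fun z => c z i) x, α • d⟫ = α * (- c x i) := by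
      rw [real_inner_smul_right]
      have := hlin i
      have : ⟪gradient (fun z => c z i) x, d⟫ = - c x i := by linarith
      rw [this]
    rw [h2] at h1
    have h3 : |c (x + α • d) i| ≤ |c x i + α * (- c x i)| + γ i / 2 * (α ^ 2 * ‖d‖ ^ 2) := by
      have := abs_sub_abs_le_abs_sub (c (x + α • d) i) (c x i + α * (- c x i))
      have h4 : |c (x + α • d) i - (c x i + α * (- c x i))|
          ≤ γ i / 2 * (α ^ 2 * ‖d‖ ^ 2) := by
        convert h1 using 2; ring
      linarith
    have h5 : |c x i + α * (- c x i)| = (1 - α) * |c x i| := by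
      have : c x i + α * (- c x i) = (1 - α) * c x i := by ring
      rw [this, abs_mul, abs_of_nonneg (by linarith : (0:ℝ) ≤ 1 - α)]
    rw [h5] at h3
    linarith
  have hcsum : ∑ i, |c (x + α • d) i| ≤
      ∑ i, ((1 - α) * |c x i| + γ i / 2 * α ^ 2 * ‖d‖ ^ 2) :=
    Finset.sum_le_sum fun i _ => hcpart i
  have hcsum' : ∑ i, ((1 - α) * |c x i| + γ i / 2 * α ^ 2 * ‖d‖ ^ 2)
      = (1 - α) * ∑ i, |c x i| + (∑ i, γ i) / 2 * α ^ 2 * ‖d‖ ^ 2 := by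
    rw [Finset.sum_add_distrib, ← Finset.mul_sum]
    congr 1
    rw [Finset.sum_div, Finset.sum_mul, Finset.sum_mul]
  nlinarith [mul_le_mul_of_nonneg_left hfpart (le_of_lt hτ)]
end

section
/- For any k ∈ ℕ, let Y₀, …, Y_k be independent random variables taking values in {0, 1} on a probability space (Ω, F, P). Then for any s ∈ ℕ and δ ∈ (0, 1): if Σ_{j=0}^{k} P[Y_j = 1] ≥ ℓ(s, δ), then P[ Σ_{j=0}^{k} Y_j ≤ s ] ≤ δ, where ℓ(s, δ) := s + log(1/δ) + √( (log(1/δ))² + 2 s log(1/δ) ). -/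
open MeasureTheory ProbabilityTheory

/-- `ℓ(s, δ) = s + log(1/δ) + √(log(1/δ)² + 2 s log(1/δ))`. -/
noncomputable def ell (s δ : ℝ) : ℝ :=
  s + Real.log (1/δ) + Real.sqrt ((Real.log (1/δ))^2 + 2 * s * Real.log (1/δ))

lemma key_G (x : ℝ) (hx0 : 0 < x) (hx1 : x ≤ 1) :
    0 ≤ (1 - x^2)/2 + x * Real.log x := by
  set f : ℝ → ℝ := fun y => (1 - y^2)/2 + y * Real.log y with hf
  have hder : ∀ y : ℝ, 0 < y → HasDerivAt f (-y + (Real.log y + 1)) y := by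
    intro y hy
    have h1 : HasDerivAt (fun y : ℝ => (1 - y^2)/2) (-y) y := by
      have := ((hasDerivAt_pow 2 y).const_sub 1).div_const 2
      simpa using this.congr_deriv (by ring)
    exact h1.add (Real.hasDerivAt_mul_log hy.ne')
  have hA : AntitoneOn f (Set.Icc x 1) := by
    apply antitoneOn_of_deriv_nonpos (convex_Icc x 1)
    · apply ContinuousOn.add
      · fun_prop
      · exact continuousOn_id.mul (Real.continuousOn_log.mono (by
          intro y hy
          simp only [Set.mem_compl_iff, Set.mem_singleton_iff]
          rcases hy with ⟨h1, _⟩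
          exact (lt_of_lt_of_le hx0 h1).ne'))
    · intro y hy
      rw [interior_Icc] at hy
      exact ((hder y (lt_trans hx0 hy.1)).differentiableAt).differentiableWithinAt
    · intro y hy
      rw [interior_Icc] at hy
      have hy0 : 0 < y := lt_trans hx0 hy.1
      rw [(hder y hy0).deriv]
      have := Real.log_le_sub_one_of_pos hy0
      linarith
  have := hA (Set.mem_Icc.mpr ⟨le_refl x, hx1⟩) (Set.mem_Icc.mpr ⟨hx1, le_refl 1⟩) hx1
  simpa [hf] using this

lemma key_ineq (x : ℝ) (hx0 : 0 < x) (hx1 : x ≤ 1) :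
    (1 - x)^2/2 ≤ 1 - x + x * Real.log x := by
  nlinarith [key_G x hx0 hx1]

/-- Lemma B.1: Chernoff-type bound for independent Bernoulli random variables. -/
theorem stmt_9 (Ω : Type*) [MeasurableSpace Ω] (P : Measure Ω) [IsProbabilityMeasure P]
    (k : ℕ) (Y : Fin (k+1) → Ω → ℝ)
    (hmeas : ∀ j, Measurable (Y j))
    (hval : ∀ j ω, Y j ω = 0 ∨ Y j ω = 1)
    (hind : iIndepFun Y P)
    (s : ℕ) (δ : ℝ) (hδ : δ ∈ Set.Ioo (0:ℝ) 1)
    (hsum : ell s δ ≤ ∑ j, (P {ω | Y j ω = 1}).toReal) :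
    P {ω | ∑ j, Y j ω ≤ (s : ℝ)} ≤ ENNReal.ofReal δ := by
  obtain ⟨hδ0, hδ1⟩ := hδ
  set L : ℝ := Real.log (1/δ) with hLdef
  have hLpos : 0 < L := Real.log_pos (by rw [lt_div_iff₀ hδ0]; linarith)
  have hlogδ : Real.log δ = -L := by rw [hLdef, one_div, Real.log_inv, neg_neg]
  set p : Fin (k+1) → ℝ := fun j => (P {ω | Y j ω = 1}).toReal with hpdef
  set M : ℝ := ∑ j, p j with hMdef
  have hp0 : ∀ j, 0 ≤ p j := fun j => ENNReal.toReal_nonneg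
  have hp1 : ∀ j, p j ≤ 1 := by
    intro j
    have h := prob_le_one (μ := P) (s := {ω | Y j ω = 1})
    simpa [hpdef] using ENNReal.toReal_mono (by simp) h
  have hsqnn : 0 ≤ Real.sqrt (L^2 + 2*(s:ℝ)*L) := Real.sqrt_nonneg _
  have hM : (s:ℝ) + L + Real.sqrt (L^2 + 2*(s:ℝ)*L) ≤ M := by
    simpa [ell, hLdef, hMdef, hpdef] using hsum
  have hs0R : (0:ℝ) ≤ (s:ℝ) := Nat.cast_nonneg s
  have hMpos : 0 < M := by linarith
  -- choose x
  obtain ⟨x, hx0, hx1, hxlog⟩ :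
      ∃ x : ℝ, 0 < x ∧ x ≤ 1 ∧ (x - 1) * M - (s:ℝ) * Real.log x ≤ Real.log δ := by
    rcases Nat.eq_zero_or_pos s with hs | hs
    · refine ⟨1 - L/M, ?_, ?_, ?_⟩
      · have h2L : 2*L ≤ M := by
          subst hs
          push_cast at hM
          norm_num at hM
          rw [Real.sqrt_sq hLpos.le] at hM
          linarith
        have : L/M < 1 := (div_lt_one hMpos).mpr (by linarith)
        linarith
      · have : 0 ≤ L/M := by positivity
        linarith
      · rw [hs, hlogδ]
        push_cast
        rw [zero_mul, sub_zero]
        have : (1 - L/M - 1) * M = -L := by field_simp; ring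
        linarith [this.le]
    · have hsR : (0:ℝ) < s := by exact_mod_cast hs
      have hsM : (s:ℝ) < M := by linarith
      refine ⟨(s:ℝ)/M, by positivity, le_of_lt ((div_lt_one hMpos).mpr hsM), ?_⟩
      set x := (s:ℝ)/M with hxdef
      have hx0 : 0 < x := by positivity
      have hx1 : x ≤ 1 := le_of_lt ((div_lt_one hMpos).mpr hsM)
      have hkey := key_ineq x hx0 hx1
      have hxM : x * M = (s:ℝ) := by rw [hxdef]; field_simp
      -- (M - s)^2 ≥ 2 L M
      have hMs : 2 * L * M ≤ (M - (s:ℝ))^2 := by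
        have h1 : Real.sqrt (L^2 + 2*(s:ℝ)*L) ≤ M - ((s:ℝ) + L) := by linarith
        have h2 : (Real.sqrt (L^2 + 2*(s:ℝ)*L))^2 = L^2 + 2*(s:ℝ)*L :=
          Real.sq_sqrt (by positivity)
        nlinarith [sq_nonneg (M - ((s:ℝ)+L))]
      rw [hlogδ]
      -- from hkey * M : M(1-x)²/2 ≤ M - s + s log x  (since Mx = s)
      have hkeyM : M * ((1-x)^2/2) ≤ M - (s:ℝ) + (s:ℝ) * Real.log x := by
        have := mul_le_mul_of_nonneg_left hkey hMpos.le
        calc M * ((1-x)^2/2) ≤ M * (1 - x + x * Real.log x) := this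
          _ = M - x*M + (x*M) * Real.log x := by ring
          _ = M - (s:ℝ) + (s:ℝ) * Real.log x := by rw [hxM]
      have hMx : M * (1 - x) = M - (s:ℝ) := by rw [mul_sub, mul_one, mul_comm M x, hxM]
      have hMx2 : M^2 * (1-x)^2 = (M - (s:ℝ))^2 := by
        linear_combination (M*(1-x) + (M - (s:ℝ))) * hMx
      have h2 : (2*L) * M ≤ (M * (1-x)^2) * M := by
        calc (2*L) * M = 2*L*M := by ring
          _ ≤ (M - (s:ℝ))^2 := hMs
          _ = M^2 * (1-x)^2 := hMx2.symm
          _ = (M * (1-x)^2) * M := by ring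
      have h1 : 2*L ≤ M * (1-x)^2 := le_of_mul_le_mul_right h2 hMpos
      have h1' : M * ((1-x)^2/2) = (M * (1-x)^2)/2 := by ring
      have hgoal : (x-1)*M = (s:ℝ) - M := by linear_combination hxM
      linarith [hkeyM, h1, h1', hgoal]
  set t : ℝ := Real.log x with htdef
  have ht : t ≤ 0 := Real.log_nonpos hx0.le hx1
  have hext : Real.exp t = x := Real.exp_log hx0
  -- pointwise rewriting of exp (t * Y j ω)
  have hpt : ∀ j ω, Real.exp (t * Y j ω) = 1 + (x - 1) * Y j ω := by
    intro j ω
    rcases hval j ω with h | h <;> rw [h] <;> simp [hext]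
  have hYint : ∀ j, Integrable (Y j) P := by
    intro j
    refine Integrable.mono' (integrable_const 1) (hmeas j).aestronglyMeasurable
      (ae_of_all _ fun ω => ?_)
    rcases hval j ω with h | h <;> rw [h] <;> norm_num
  have h_int : ∀ j, Integrable (fun ω => Real.exp (t * Y j ω)) P := by
    intro j
    exact ((integrable_const (1:ℝ)).add ((hYint j).const_mul (x-1))).congr
      (ae_of_all _ fun ω => (hpt j ω).symm)
  -- E[Y j] = p j
  have hEY : ∀ j, ∫ ω, Y j ω ∂P = p j := by
    intro j
    have hset : MeasurableSet {ω | Y j ω = 1} := (hmeas j) (measurableSet_singleton 1)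
    have : ∀ ω, Y j ω = Set.indicator {ω | Y j ω = 1} (fun _ => (1:ℝ)) ω := by
      intro ω
      rcases hval j ω with h | h
      · rw [h]; symm
        apply Set.indicator_of_notMem
        simp only [Set.mem_setOf_eq, h]; norm_num
      · rw [h]; symm
        exact Set.indicator_of_mem (by simpa using h) _
    calc ∫ ω, Y j ω ∂P = ∫ ω, Set.indicator {ω | Y j ω = 1} (fun _ => (1:ℝ)) ω ∂P := by
          exact integral_congr_ae (ae_of_all _ this)
      _ = p j := by
          rw [hpdef]
          simpa [Measure.real, Pi.one_def] using integral_indicator_one (μ := P) hset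
  -- mgf of each Y j
  have hmgf : ∀ j, mgf (Y j) P t = 1 + (x - 1) * p j := by
    intro j
    rw [mgf]
    calc ∫ ω, Real.exp (t * Y j ω) ∂P = ∫ ω, (1 + (x-1) * Y j ω) ∂P :=
          integral_congr_ae (ae_of_all _ (hpt j))
      _ = 1 + (x - 1) * p j := by
          rw [integral_add (integrable_const _) ((hYint j).const_mul _),
            integral_const, integral_const_mul, hEY j]
          simp
  -- Chernoff
  have h_int_sum : Integrable (fun ω => Real.exp (t * (∑ j, Y j ω))) P := by
    have := hind.integrable_exp_mul_sum hmeas (s := Finset.univ) (fun i _ => h_int i)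
    simpa [Finset.sum_apply] using this
  have hch := measure_le_le_exp_mul_mgf (μ := P) (X := fun ω => ∑ j, Y j ω) (t := t)
    (s:ℝ) ht h_int_sum
  have hmgfsum : mgf (fun ω => ∑ j, Y j ω) P t = ∏ j, mgf (Y j) P t := by
    have heq : (fun ω => ∑ j, Y j ω) = ∑ j, Y j := by
      funext ω; simp [Finset.sum_apply]
    rw [heq, hind.mgf_sum hmeas]
  have hprod : ∏ j, mgf (Y j) P t ≤ Real.exp ((x - 1) * M) := by
    calc ∏ j, mgf (Y j) P t = ∏ j, (1 + (x-1) * p j) := by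
          exact Finset.prod_congr rfl fun j _ => hmgf j
      _ ≤ ∏ j, Real.exp ((x-1) * p j) := by
          apply Finset.prod_le_prod
          · intro j _
            nlinarith [hp0 j, hp1 j, hx0, hx1]
          · intro j _
            rw [add_comm]
            exact Real.add_one_le_exp _
      _ = Real.exp (∑ j, (x-1) * p j) := (Real.exp_sum _ _).symm
      _ = Real.exp ((x - 1) * M) := by rw [← Finset.mul_sum, hMdef]
  have hfinal : (P {ω | ∑ j, Y j ω ≤ (s:ℝ)}).toReal ≤ δ := by
    calc (P {ω | ∑ j, Y j ω ≤ (s:ℝ)}).toReal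
        ≤ Real.exp (-t * (s:ℝ)) * mgf (fun ω => ∑ j, Y j ω) P t := hch
      _ ≤ Real.exp (-t * (s:ℝ)) * Real.exp ((x - 1) * M) := by
          apply mul_le_mul_of_nonneg_left _ (Real.exp_pos _).le
          rw [hmgfsum]; exact hprod
      _ = Real.exp ((x - 1) * M - (s:ℝ) * t) := by
          rw [← Real.exp_add]; congr 1; ring
      _ ≤ Real.exp (Real.log δ) := Real.exp_le_exp.mpr hxlog
      _ = δ := Real.exp_log hδ0
  rw [← ENNReal.ofReal_toReal (measure_ne_top P _)]
  exact ENNReal.ofReal_le_ofReal hfinal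
end

section
/- Let s ≥ 0 be a real number, δ ∈ (0, 1), and μ a real number with μ ≥ ℓ(s, δ) := s + log(1/δ) + √((log(1/δ))² + 2 s log(1/δ)). Then μ > 0 and exp( −(μ − s)²/(2μ) ) ≤ δ. -/
/-- The analytic core of the Chernoff bound (Lemma B.1):
if `μ ≥ ℓ(s, δ)` then `μ > 0` and `exp(-(μ-s)²/(2μ)) ≤ δ`. -/
theorem stmt_10 (s δ μ : ℝ) (hs : 0 ≤ s) (hδ : δ ∈ Set.Ioo (0:ℝ) 1)
    (hμ : ell s δ ≤ μ) :
    0 < μ ∧ Real.exp (-(μ - s)^2 / (2 * μ)) ≤ δ := by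
  obtain ⟨hδ0, hδ1⟩ := hδ
  set L := Real.log (1/δ) with hL
  have hLpos : 0 < L := Real.log_pos (by rw [lt_div_iff₀ hδ0]; linarith)
  have hnn : (0:ℝ) ≤ L^2 + 2 * s * L := by positivity
  have hsqrt : 0 ≤ Real.sqrt (L^2 + 2 * s * L) := Real.sqrt_nonneg _
  have hμpos : 0 < μ := by
    have : ell s δ = s + L + Real.sqrt (L^2 + 2 * s * L) := rfl
    nlinarith [hμ, this]
  refine ⟨hμpos, ?_⟩
  -- key quadratic inequality: μ² - 2μ(s+L) + s² ≥ 0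
  have hge : Real.sqrt (L^2 + 2 * s * L) ≤ μ - (s + L) := by
    have : ell s δ = s + L + Real.sqrt (L^2 + 2 * s * L) := rfl
    linarith [hμ, this.symm.le]
  have hsq : L^2 + 2 * s * L ≤ (μ - (s + L))^2 := by
    have := Real.sq_sqrt hnn
    nlinarith [sq_nonneg (μ - (s + L)), hsqrt]
  have hquad : 2 * μ * L ≤ (μ - s)^2 := by nlinarith
  have hkey : -(μ - s)^2 / (2 * μ) ≤ -L := by
    rw [div_le_iff₀ (by linarith : (0:ℝ) < 2 * μ)]
    nlinarith
  have : Real.exp (-(μ - s)^2 / (2 * μ)) ≤ Real.exp (-L) := Real.exp_le_exp.mpr hkey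
  calc Real.exp (-(μ - s)^2 / (2 * μ)) ≤ Real.exp (-L) := this
    _ = δ := by
        rw [hL, one_div, Real.log_inv, neg_neg, Real.exp_log hδ0]
end

section
/- Let K ∈ ℕ, Δ > 0, f_low ∈ ℝ, and τ₋₁ > 0. Let (τ_k)_{k=0}^{K} be a nonincreasing sequence of positive reals with τ₀ ≤ τ₋₁, let (f_k)_{k=0}^{K+1} be reals with f_k ≥ f_low for all k ∈ {0, …, K+1}, and let (c_k)_{k=0}^{K+1} be nonnegative reals. If τ_k f_{k+1} + c_{k+1} ≤ τ_k f_k + c_k − Δ for all k ∈ {0, …, K}, then (K + 1)·Δ ≤ τ₋₁(f₀ − f_low) + c₀. -/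
/-- The telescoping bound at the core of Theorem A.2 (deterministic complexity):
if the merit value `τ_k f_k + c_k` decreases by at least `Δ` at each of the
iterations `k = 0, …, K`, then `(K+1) Δ ≤ τ₋₁ (f₀ - f_low) + c₀`. -/
theorem stmt_15 (K : ℕ) (Δ flow τneg1 : ℝ) (hΔ : 0 < Δ) (hτneg1 : 0 < τneg1)
    (τ f c : ℕ → ℝ)
    (hτpos : ∀ k ≤ K, 0 < τ k)
    (hτmono : ∀ k < K, τ (k + 1) ≤ τ k)
    (hτ0 : τ 0 ≤ τneg1)
    (hf : ∀ k ≤ K + 1, flow ≤ f k)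
    (hc : ∀ k ≤ K + 1, 0 ≤ c k)
    (hdec : ∀ k ≤ K, τ k * f (k + 1) + c (k + 1) ≤ τ k * f k + c k - Δ) :
    (K + 1 : ℝ) * Δ ≤ τneg1 * (f 0 - flow) + c 0 := by
  have key : ∀ n ≤ K, τ n * (f n - flow) + c n ≤ τ 0 * (f 0 - flow) + c 0 - n * Δ := by
    intro n hn
    induction n with
    | zero => simp
    | succ m ih =>
      have hmK : m < K := hn
      have ihm := ih (le_of_lt hmK)
      have hτm : τ (m + 1) ≤ τ m := hτmono m hmK
      have hfm : flow ≤ f (m + 1) := hf (m + 1) (by omega)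
      have hdm := hdec m (le_of_lt hmK)
      have h1 : τ (m + 1) * (f (m + 1) - flow) ≤ τ m * (f (m + 1) - flow) :=
        mul_le_mul_of_nonneg_right hτm (by linarith)
      have h2 : τ m * (f (m + 1) - flow) + c (m + 1)
          ≤ τ m * (f m - flow) + c m - Δ := by nlinarith [hdm]
      push_cast
      nlinarith
  have hK := key K le_rfl
  have hdK := hdec K le_rfl
  have hfK : flow ≤ f (K + 1) := hf (K + 1) le_rfl
  have hcK : 0 ≤ c (K + 1) := hc (K + 1) le_rfl
  have hτK : 0 < τ K := hτpos K le_rfl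
  have h3 : 0 ≤ τ K * (f (K + 1) - flow) + c (K + 1) := by nlinarith
  have h4 : (K : ℝ) * Δ + Δ ≤ τ 0 * (f 0 - flow) + c 0 := by nlinarith
  have hf0 : flow ≤ f 0 := hf 0 (by omega)
  have : τ 0 * (f 0 - flow) ≤ τneg1 * (f 0 - flow) :=
    mul_le_mul_of_nonneg_right hτ0 (by linarith)
  linarith
end
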